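/- arXiv:math/0108082 — 4 statements merged into one kernel-verified Lean document; each statement's English description precedes it below -/
import Mathlib

section
/- Let A be a finite abelian group, M a countable set, and β a probability measure on A such that for every proper subgroup G ⊆ A, the support of β is not contained in a single coset of G. Then the product measure β^{⊗M} on A^M is harmonically mixing. -/
/-!
Identify `μ` with the product measure `β^{⊗M}`: its point-cylinder masses determine its
finite-dimensional marginals although points need not be measurable, because on a countable
space a probability measure is pinned down by lower bounds on the outer masses of points. Under
the product measure the integral of a character with support `S` factors as
`∏ m ∈ S, ∫ χ m ∂β`, with no measurability needed. A nontrivial character `ψ` is not `β`-a.e.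
constant, since its level sets are cosets of the proper subgroup `ker ψ`; by strict convexity of
`ℂ`, `‖∫ ψ ∂β‖ < 1`. Finitely many characters give a uniform bound `c < 1`, and a character of
rank `r` then has integral of norm at most `c ^ r`.
-/

open MeasureTheory

/-- Evaluation at `a` of the character of `A^M` with coefficient system `χ`
(a family of characters of `A`, all but finitely many trivial). -/
noncomputable def charEval {A M : Type*} [AddCommGroup A] (χ : M → AddChar A ℂ)
    (a : M → A) : ℂ :=
  ∏ᶠ m, χ m (a m)

namespace MeasureTheory

lemma measure_measurableAtom {α : Type*} [MeasurableSpace α] (μ : Measure α) (x : α) :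
    μ (measurableAtom x) = μ {x} := by
  refine le_antisymm ?_ (measure_mono (by simp))
  calc μ (measurableAtom x) ≤ μ (toMeasurable μ {x}) :=
        measure_mono (measurableAtom_subset (measurableSet_toMeasurable μ _)
          (subset_toMeasurable μ _ rfl))
    _ = μ {x} := measure_toMeasurable _

namespace Measure

section Countable

variable {α : Type*} [MeasurableSpace α] [Countable α] {μ ν : Measure α}

lemma apply_le_apply_of_forall_singleton_le (h : ∀ x, μ {x} ≤ ν {x}) {s : Set α}
    (hs : MeasurableSet s) : μ s ≤ ν s := by
  have hs_eq : s = ⋃₀ (measurableAtom '' s) := by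
    refine subset_antisymm (fun x hx => ⟨_, ⟨x, hx, rfl⟩, mem_measurableAtom_self x⟩) ?_
    rintro y ⟨_, ⟨x, hx, rfl⟩, hy⟩
    exact measurableAtom_subset hs hx hy
  have hcount : (measurableAtom '' s).Countable := s.to_countable.image _
  have hmeas : ∀ t ∈ measurableAtom '' s, MeasurableSet t := by
    rintro _ ⟨x, -, rfl⟩
    exact .measurableAtom_of_countable x
  have hdisj : (measurableAtom '' s).PairwiseDisjoint id := by
    rintro _ ⟨x, -, rfl⟩ _ ⟨y, -, rfl⟩ hne
    exact disjoint_measurableAtom_of_notMem fun hxy => hne (measurableAtom_eq_of_mem hxy)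
  rw [hs_eq, measure_sUnion hcount hdisj hmeas, measure_sUnion hcount hdisj hmeas]
  refine ENNReal.tsum_le_tsum fun ⟨t, ht⟩ => ?_
  obtain ⟨x, -, rfl⟩ := ht
  simpa only [measure_measurableAtom] using h x

lemma eq_of_forall_singleton_le [IsProbabilityMeasure μ] [IsProbabilityMeasure ν]
    (h : ∀ x, μ {x} ≤ ν {x}) : μ = ν := by
  ext s hs
  refine le_antisymm (apply_le_apply_of_forall_singleton_le h hs) ?_
  rw [← compl_compl s, prob_compl_eq_one_sub hs.compl, prob_compl_eq_one_sub hs.compl]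
  exact tsub_le_tsub_left (apply_le_apply_of_forall_singleton_le h hs.compl) 1

end Countable

section InfinitePi

variable {ι : Type*} {X : ι → Type*} [∀ i, MeasurableSpace (X i)]
  (μ : (i : ι) → Measure (X i)) [∀ i, IsProbabilityMeasure (μ i)]

lemma infinitePi_map_piEquivPiSubtypeProd (p : ι → Prop) [DecidablePred p] :
    (infinitePi μ).map (MeasurableEquiv.piEquivPiSubtypeProd X p) =
      (infinitePi fun i : Subtype p => μ i).prod (infinitePi fun i : {i // ¬p i} => μ i) := by
  rw [MeasurableEquiv.map_apply_eq_iff_map_symm_apply_eq]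
  refine (eq_infinitePi μ fun s t ht => ?_).symm
  have hpi : (MeasurableEquiv.piEquivPiSubtypeProd X p).symm ⁻¹' (s : Set ι).pi t =
      ((s.subtype p : Set (Subtype p)).pi fun i => t i) ×ˢ
        ((s.subtype (¬p ·) : Set {i // ¬p i}).pi fun i => t i) := by
    ext ⟨x, y⟩
    simp only [Set.mem_preimage, Set.mem_pi, Finset.mem_coe, Set.mem_prod, Finset.mem_subtype,
      Subtype.forall, MeasurableEquiv.piEquivPiSubtypeProd_symm_apply]
    grind
  rw [MeasurableEquiv.map_apply, hpi, prod_prod, infinitePi_pi, infinitePi_pi,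
    Finset.prod_subtype_eq_prod_filter (fun i => μ i (t i)),
    Finset.prod_subtype_eq_prod_filter (fun i => μ i (t i)),
    Finset.prod_filter_mul_prod_filter_not]
  all_goals exact fun i _ => ht i

/-- No measurability of the `f i` is needed: splitting off the coordinates in `s` turns the
integral into one over a product measure, where `integral_prod_mul` holds unconditionally. -/
lemma integral_infinitePi_finset_prod {𝕜 : Type*} [RCLike 𝕜] (s : Finset ι)
    (f : (i : ι) → X i → 𝕜) :
    ∫ x, ∏ i ∈ s, f i (x i) ∂infinitePi μ = ∏ i ∈ s, ∫ x, f i x ∂μ i := by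
  classical
  set e := MeasurableEquiv.piEquivPiSubtypeProd X (· ∈ s)
  have he : MeasurePreserving e.symm ((Measure.pi fun i : s => μ i).prod
      (infinitePi fun i : {i // i ∉ s} => μ i)) (infinitePi μ) := by
    refine MeasurePreserving.symm e ⟨e.measurable, ?_⟩
    rw [infinitePi_map_piEquivPiSubtypeProd, infinitePi_eq_pi]
  rw [← he.integral_comp', ← Finset.prod_coe_sort s fun i => ∫ x, f i x ∂μ i,
    ← integral_fintype_prod_eq_prod]
  calc _ = ∫ y : ((i : s) → X i) × ((i : {i // i ∉ s}) → X i),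
        (∏ i : s, f i (y.1 i)) * (fun _ => (1 : 𝕜)) y.2 ∂(Measure.pi fun i : s => μ i).prod
          (infinitePi fun i : {i // i ∉ s} => μ i) := by
        congr 1 with y
        rw [mul_one, ← Finset.prod_coe_sort s]
        simp [e]
    _ = _ := by
        rw [integral_prod_mul (fun x : (i : s) → X i => ∏ i : s, f i (x i)) (fun _ => (1 : 𝕜))]
        simp

end InfinitePi

end Measure

section Cylinder

variable {M A : Type*} [MeasurableSpace A] [Countable A] {β : Measure A} [IsProbabilityMeasure β]
  {μ : Measure (M → A)} [IsProbabilityMeasure μ]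

lemma map_restrict_eq_pi_of_measure_cylinder
    (hμ : ∀ (s : Finset M) (f : M → A), μ {a | ∀ m ∈ s, a m = f m} = ∏ m ∈ s, β {f m})
    (s : Finset M) : μ.map s.restrict = Measure.pi fun _ : s => β := by
  classical
  have : IsProbabilityMeasure (μ.map s.restrict) :=
    Measure.isProbabilityMeasure_map (Finset.measurable_restrict s).aemeasurable
  refine (Measure.eq_of_forall_singleton_le fun g => ?_).symm
  obtain ⟨a₀⟩ : Nonempty (M → A) := nonempty_of_isProbabilityMeasure μ
  have hfiber : s.restrict ⁻¹' ({g} : Set (s → A)) =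
      {a | ∀ m ∈ s, a m = Function.updateFinset a₀ s g m} := by
    ext a
    simp only [Set.mem_preimage, Set.mem_singleton_iff, funext_iff, Subtype.forall,
      Finset.restrict, Set.mem_ofPred_eq]
    exact forall₂_congr fun m hm => by simp [Function.updateFinset, hm]
  calc Measure.pi (fun _ : s => β) {g} = ∏ m : s, β {g m} := by
        rw [← Set.univ_pi_singleton, Measure.pi_pi]
    _ = μ (s.restrict ⁻¹' {g}) := by
        rw [hfiber, hμ, ← Finset.prod_coe_sort s]
        simp [Function.updateFinset]
    _ ≤ μ.map s.restrict {g} := Measure.le_map_apply (Finset.measurable_restrict s).aemeasurable _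

lemma eq_infinitePi_of_measure_cylinder
    (hμ : ∀ (s : Finset M) (f : M → A), μ {a | ∀ m ∈ s, a m = f m} = ∏ m ∈ s, β {f m}) :
    μ = Measure.infinitePi fun _ : M => β := by
  refine Measure.eq_infinitePi _ fun s t ht => ?_
  have : (s : Set M).pi t = s.restrict ⁻¹' (Set.univ.pi fun i => t i) := by ext; simp
  rw [this, ← Measure.map_apply (Finset.measurable_restrict s) (.univ_pi fun i => ht i),
    map_restrict_eq_pi_of_measure_cylinder hμ, Measure.pi_pi,
    Finset.prod_coe_sort s (fun i => β (t i))]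

end Cylinder

end MeasureTheory

section Characters

variable {A : Type*} [AddCommGroup A]

lemma AddChar.sub_mem_ker_iff {K : Type*} [Field K] (ψ : AddChar A K) {a x : A} :
    a - x ∈ ψ.toAddMonoidHom.ker ↔ ψ a = ψ x := by
  rw [AddMonoidHom.mem_ker, AddChar.toAddMonoidHom_apply, ofMul_eq_zero, AddChar.map_sub_eq_div,
    div_eq_one_iff_eq (ψ.val_isUnit x).ne_zero]

variable [Finite A] [MeasurableSpace A] {β : Measure A} [IsProbabilityMeasure β]

lemma norm_integral_addChar_lt_one
    (hβ : ∀ G : AddSubgroup A, G ≠ ⊤ → ∀ x : A, β {a | a - x ∈ G} < 1)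
    {ψ : AddChar A ℂ} (hψ : ψ ≠ 1) : ‖∫ a, ψ a ∂β‖ < 1 := by
  refine (ae_eq_const_or_norm_integral_lt_of_norm_le_const
    (C := 1) (ae_of_all _ fun a => (ψ.norm_apply a).le)).resolve_left (fun hconst => ?_)
    |>.trans_eq (by simp)
  obtain ⟨x, hx⟩ := hconst.exists
  have hker : ψ.toAddMonoidHom.ker ≠ ⊤ := by
    obtain ⟨a, ha⟩ := AddChar.ne_one_iff.1 hψ
    rw [Ne, AddSubgroup.eq_top_iff', not_forall]
    exact ⟨a, by simpa using ha⟩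
  refine (hβ _ hker x).ne (le_antisymm prob_le_one ?_)
  rw [measure_congr (ae_eq_univ.2 ?_), measure_univ]
  refine measure_mono_null (fun a ha => ?_) (ae_iff.1 hconst)
  simp_all [ψ.sub_mem_ker_iff]

lemma exists_forall_norm_integral_addChar_le
    (hβ : ∀ G : AddSubgroup A, G ≠ ⊤ → ∀ x : A, β {a | a - x ∈ G} < 1) :
    ∃ c, 0 ≤ c ∧ c < 1 ∧ ∀ ψ : AddChar A ℂ, ψ ≠ 1 → ‖∫ a, ψ a ∂β‖ ≤ c := by
  cases isEmpty_or_nonempty {ψ : AddChar A ℂ // ψ ≠ 1} with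
  | inl hempty => exact ⟨0, le_rfl, one_pos, fun ψ hψ => (hempty.false ⟨ψ, hψ⟩).elim⟩
  | inr hne =>
    obtain ⟨ψ₀, hψ₀⟩ := Finite.exists_max fun ψ : {ψ : AddChar A ℂ // ψ ≠ 1} => ‖∫ a, ψ.1 a ∂β‖
    exact ⟨_, norm_nonneg _, norm_integral_addChar_lt_one hβ ψ₀.2, fun ψ hψ => hψ₀ ⟨ψ, hψ⟩⟩

end Characters

lemma charEval_eq_prod {A M : Type*} [AddCommGroup A] {χ : M → AddChar A ℂ}
    (hχ : {m | χ m ≠ 1}.Finite) (a : M → A) :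
    charEval χ a = ∏ m ∈ hχ.toFinset, χ m (a m) :=
  finprod_eq_prod_of_mulSupport_subset _ fun m hm =>
    hχ.mem_toFinset.2 fun h => hm (by simp [h])

theorem bernoulli_harmonically_mixing_general_general (A : Type*) [AddCommGroup A] [Fintype A]
    [MeasurableSpace A] (M : Type*)
    (β : Measure A) [IsProbabilityMeasure β]
    (hβ : ∀ G : AddSubgroup A, G ≠ ⊤ → ∀ x : A, β {a | a - x ∈ G} < 1)
    (μ : Measure (M → A)) [IsProbabilityMeasure μ]
    (hμ : ∀ (s : Finset M) (f : M → A),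
      μ {a | ∀ m ∈ s, a m = f m} = ∏ m ∈ s, β {f m}) :
    ∀ ε > 0, ∃ R : ℕ, ∀ χ : M → AddChar A ℂ, {m | χ m ≠ 1}.Finite →
      R < {m | χ m ≠ 1}.ncard → ‖∫ a, charEval χ a ∂μ‖ < ε := by
  intro ε hε
  obtain ⟨c, hc0, hc1, hc⟩ := exists_forall_norm_integral_addChar_le hβ
  obtain ⟨R, hR⟩ := exists_pow_lt_of_lt_one hε hc1
  refine ⟨R, fun χ hχ hrank => ?_⟩
  rw [Set.ncard_eq_toFinset_card _ hχ] at hrank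
  simp_rw [charEval_eq_prod hχ, eq_infinitePi_of_measure_cylinder hμ,
    Measure.integral_infinitePi_finset_prod, norm_prod]
  calc ∏ m ∈ hχ.toFinset, ‖∫ a, χ m a ∂β‖ ≤ ∏ _m ∈ hχ.toFinset, c :=
        Finset.prod_le_prod (fun _ _ => norm_nonneg _) fun m hm => hc _ (hχ.mem_toFinset.1 hm)
    _ = c ^ hχ.toFinset.card := Finset.prod_const c
    _ ≤ c ^ R := pow_le_pow_of_le_one hc0 hc1.le hrank.le
    _ < ε := hR

/-- If the support of `β` is not contained in a single coset of any proper
subgroup of the finite abelian group `A`, then the Bernoulli measure `β^{⊗M}`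
on `A^M` is harmonically mixing. -/
theorem bernoulli_harmonically_mixing_general (A : Type*) [AddCommGroup A] [Fintype A]
    [MeasurableSpace A] (M : Type*) [Countable M]
    (β : Measure A) [IsProbabilityMeasure β]
    (hβ : ∀ G : AddSubgroup A, G ≠ ⊤ → ∀ x : A, β {a | a - x ∈ G} < 1)
    (μ : Measure (M → A)) [IsProbabilityMeasure μ]
    (hμ : ∀ (s : Finset M) (f : M → A),
      μ {a | ∀ m ∈ s, a m = f m} = ∏ m ∈ s, β {f m}) :
    ∀ ε > 0, ∃ R : ℕ, ∀ χ : M → AddChar A ℂ, {m | χ m ≠ 1}.Finite →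
      R < {m | χ m ≠ 1}.ncard → ‖∫ a, charEval χ a ∂μ‖ < ε :=
  bernoulli_harmonically_mixing_general_general A M β hβ μ hμ
end

section
/- Let A be a finite abelian group, Q a strictly positive stochastic matrix on A, and for characters ξ, ζ of A with ζ nontrivial, define P_{ξ,ζ} = M_ξ ∘ Q ∘ M_ζ ∘ Q on ℂ^A, where M_χ is multiplication by χ and Q is the transition operator. Then the operator norm of P_{ξ,ζ} with respect to the sup-norm is strictly less than 1. -/
/-! By compactness of the unit sphere of the finite-dimensional space `(ℂ^A, ‖·‖_∞)` it suffices
that `‖P φ‖ < ‖φ‖` for every `φ ≠ 0`. The multiplication operators are isometries and `Q` is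
a contraction which, since `ℂ` is strictly convex and `Q` has positive entries, is strict on
nonconstant functions. So if `φ` is nonconstant the first application of `Q` contracts strictly;
if `φ` is a nonzero constant, `Q φ = φ` and `M_ζ φ` is nonconstant because `ζ ≠ 1`, so the
second application of `Q` does. -/

/-- The transition operator of a stochastic matrix on `ℂ^A`. -/
noncomputable def transOp {A : Type*} [Fintype A] (q : A → A → ℝ) (φ : A → ℂ) : A → ℂ :=
  fun a => ∑ b, (q a b : ℂ) * φ b

/-- Multiplication by a character. -/
noncomputable def multOp {A : Type*} [AddCommGroup A] (χ : AddChar A ℂ) (φ : A → ℂ) : A → ℂ :=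
  fun a => χ a * φ a

open Finset

theorem LinearMap.exists_lt_one_forall_norm_le_of_norm_lt {𝕜 E F : Type*} [RCLike 𝕜]
    [NormedAddCommGroup E] [NormedSpace 𝕜 E] [FiniteDimensional 𝕜 E]
    [NormedAddCommGroup F] [NormedSpace 𝕜 F] (f : E →ₗ[𝕜] F)
    (hf : ∀ x, x ≠ 0 → ‖f x‖ < ‖x‖) : ∃ c < 1, ∀ x, ‖f x‖ ≤ c * ‖x‖ := by
  let T := LinearMap.toContinuousLinearMap f
  refine ⟨‖T‖, ?_, T.le_opNorm⟩
  rcases (Metric.sphere (0 : E) 1).eq_empty_or_nonempty with hempty | hne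
  · have hT : ‖T‖ ≤ 0 := T.opNorm_le_of_unit_norm le_rfl fun x hx =>
      ((Set.eq_empty_iff_forall_notMem.mp hempty) x (by simpa using hx)).elim
    linarith
  · have : ProperSpace E := FiniteDimensional.proper 𝕜 E
    obtain ⟨x₀, hx₀, hmax⟩ := (isCompact_sphere (0 : E) 1).exists_isMaxOn hne
      (continuous_norm.comp T.continuous).continuousOn
    have hx₀' : ‖x₀‖ = 1 := by simpa using hx₀
    calc ‖T‖ ≤ ‖T x₀‖ := T.opNorm_le_of_unit_norm (norm_nonneg _)
          fun x hx => hmax (by simpa using hx)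
      _ < 1 := hx₀' ▸ hf x₀ (by rintro rfl; simp at hx₀')

theorem iSup_norm_eq_pi_norm {ι E : Type*} [Fintype ι] [SeminormedAddCommGroup E] (f : ι → E) :
    ⨆ i, ‖f i‖ = ‖f‖ :=
  le_antisymm (Real.iSup_le (norm_le_pi_norm f) (norm_nonneg f))
    ((pi_norm_le_iff_of_nonneg (Real.iSup_nonneg fun i => norm_nonneg (f i))).mpr
      fun i => le_ciSup (f := fun i => ‖f i‖) (Finite.bddAbove_range _) i)

section Operators

variable {A : Type*} [Fintype A]

noncomputable def transOpLin (q : A → A → ℝ) : (A → ℂ) →ₗ[ℂ] (A → ℂ) where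
  toFun := transOp q
  map_add' φ ψ := by ext a; simp [transOp, mul_add, sum_add_distrib]
  map_smul' c φ := by ext a; simp [transOp, mul_sum, mul_left_comm]

theorem transOp_const {q : A → A → ℝ} (hqrow : ∀ a, ∑ b, q a b = 1) (z : ℂ) :
    transOp q (fun _ => z) = fun _ => z := by
  ext a
  simp [transOp, ← sum_mul, ← Complex.ofReal_sum, hqrow a]

theorem norm_transOp_le {q : A → A → ℝ} (hqnonneg : ∀ a b, 0 ≤ q a b)
    (hqrow : ∀ a, ∑ b, q a b = 1) (φ : A → ℂ) : ‖transOp q φ‖ ≤ ‖φ‖ := by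
  refine (pi_norm_le_iff_of_nonneg (norm_nonneg φ)).mpr fun a => ?_
  calc ‖transOp q φ a‖ ≤ ∑ b, q a b * ‖φ‖ := by
        refine (norm_sum_le _ _).trans (sum_le_sum fun b _ => ?_)
        rw [norm_mul, Complex.norm_real, Real.norm_of_nonneg (hqnonneg a b)]
        exact mul_le_mul_of_nonneg_left (norm_le_pi_norm φ b) (hqnonneg a b)
    _ = ‖φ‖ := by rw [← sum_mul, hqrow a, one_mul]

theorem norm_transOp_lt_of_ne {q : A → A → ℝ} (hqpos : ∀ a b, 0 < q a b)
    (hqrow : ∀ a, ∑ b, q a b = 1) {φ : A → ℂ} {i j : A} (hij : φ i ≠ φ j) :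
    ‖transOp q φ‖ < ‖φ‖ := by
  have hlt (a : A) : ‖transOp q φ a‖ < ‖φ‖ := by
    simp only [transOp, ← Complex.real_smul]
    exact norm_sum_lt_of_strictConvexSpace (fun b _ => (hqpos a b).le) (hqrow a)
      (mem_univ i) (mem_univ j) hij (hqpos a i).ne' (hqpos a j).ne'
      fun b _ => norm_le_pi_norm φ b
  exact (pi_norm_lt_iff ((norm_nonneg _).trans_lt (hlt i))).mpr hlt

variable [AddCommGroup A]

noncomputable def multOpLin (χ : AddChar A ℂ) : (A → ℂ) →ₗ[ℂ] (A → ℂ) where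
  toFun := multOp χ
  map_add' φ ψ := by ext a; simp [multOp, mul_add]
  map_smul' c φ := by ext a; simp [multOp, mul_left_comm]

theorem norm_multOp (χ : AddChar A ℂ) (φ : A → ℂ) : ‖multOp χ φ‖ = ‖φ‖ := by
  simp [← iSup_norm_eq_pi_norm, multOp, AddChar.norm_apply]

end Operators

theorem norm_multOp_transOp_multOp_transOp_lt {A : Type*} [AddCommGroup A] [Fintype A]
    {q : A → A → ℝ} (hqpos : ∀ a b, 0 < q a b) (hqrow : ∀ a, ∑ b, q a b = 1)
    (ξ : AddChar A ℂ) {ζ : AddChar A ℂ} (hζ : ζ ≠ 1) {φ : A → ℂ} (hφ : φ ≠ 0) :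
    ‖multOp ξ (transOp q (multOp ζ (transOp q φ)))‖ < ‖φ‖ := by
  rw [norm_multOp]
  by_cases hconst : ∃ i j, φ i ≠ φ j
  · obtain ⟨i, j, hij⟩ := hconst
    calc ‖transOp q (multOp ζ (transOp q φ))‖
        ≤ ‖multOp ζ (transOp q φ)‖ := norm_transOp_le (fun a b => (hqpos a b).le) hqrow _
      _ = ‖transOp q φ‖ := norm_multOp ζ _
      _ < ‖φ‖ := norm_transOp_lt_of_ne hqpos hqrow hij
  · push Not at hconst
    have hφc : φ = fun _ => φ 0 := funext fun a => hconst a 0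
    have hφ0 : φ 0 ≠ 0 := fun h => hφ (hφc.trans (funext fun _ => h))
    obtain ⟨b, hb⟩ := AddChar.ne_one_iff.mp hζ
    have hne : multOp ζ φ b ≠ multOp ζ φ 0 := by
      rw [multOp, multOp, hconst b 0, AddChar.map_zero_eq_one]
      exact fun h => hb (mul_right_cancel₀ hφ0 h)
    rw [hφc, transOp_const hqrow, ← hφc]
    calc ‖transOp q (multOp ζ φ)‖ < ‖multOp ζ φ‖ := norm_transOp_lt_of_ne hqpos hqrow hne
      _ = ‖φ‖ := norm_multOp ζ φ

/-- For a strictly positive stochastic matrix `Q` on a finite abelian group `A`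
and characters `ξ`, `ζ` of `A` with `ζ` nontrivial, the operator
`P = M_ξ ∘ Q ∘ M_ζ ∘ Q` on `(ℂ^A, ‖·‖_∞)` has operator norm strictly less
than 1. -/
theorem operator_norm_lt_one (A : Type*) [AddCommGroup A] [Fintype A]
    (q : A → A → ℝ) (hqpos : ∀ a b, 0 < q a b) (hqrow : ∀ a, ∑ b, q a b = 1)
    (ξ ζ : AddChar A ℂ) (hζ : ζ ≠ 1) :
    ∃ c : ℝ, c < 1 ∧ ∀ φ : A → ℂ,
      (⨆ a, ‖multOp ξ (transOp q (multOp ζ (transOp q φ))) a‖) ≤ c * ⨆ a, ‖φ a‖ := by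
  obtain ⟨c, hc1, hc⟩ := LinearMap.exists_lt_one_forall_norm_le_of_norm_lt
    ((multOpLin ξ).comp ((transOpLin q).comp ((multOpLin ζ).comp (transOpLin q))))
    fun φ hφ => norm_multOp_transOp_multOp_transOp_lt hqpos hqrow ξ hζ hφ
  refine ⟨c, hc1, fun φ => ?_⟩
  rw [iSup_norm_eq_pi_norm, iSup_norm_eq_pi_norm]
  exact hc φ
end

section
/- Let A be a finite abelian group, F: A^M → A^M a linear cellular automaton with local map f, c ∈ A a constant, and G the affine cellular automaton with local map g = f + c. Let μ be a probability measure on A^M and J ⊆ ℕ. If F^j μ → Haar measure weak* along j ∈ J, then G^j μ → Haar measure weak* along j ∈ J. -/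
open MeasureTheory Filter

lemma aux_sing {A : Type*} [Fintype A] [MeasurableSpace A] {M : Type*} [Nonempty M]
    (lam : Measure (M → A)) [IsProbabilityMeasure lam]
    (hlam : ∀ (s : Finset M) (f : M → A),
      lam {a | ∀ m ∈ s, a m = f m} = (1 / (Fintype.card A : ENNReal)) ^ s.card)
    (x : A) : MeasurableSet {x} := by
  classical
  obtain ⟨m0⟩ := ‹Nonempty M›
  set n := Fintype.card A with hn
  haveI : Nonempty A := ⟨x⟩
  have hn0 : (n : ENNReal) ≠ 0 := by
    simp only [Ne, Nat.cast_eq_zero, hn]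
    exact Fintype.card_ne_zero
  set atom : Set A := {y | ∀ B : Set A, MeasurableSet B → (x ∈ B ↔ y ∈ B)} with hatom
  have hatom_meas : MeasurableSet atom := by
    have heq : atom = ⋂ (B : Set A) (_ : MeasurableSet B), (if x ∈ B then B else Bᶜ) := by
      ext y
      simp only [hatom, Set.mem_setOf_eq, Set.mem_iInter]
      constructor
      · intro h B hB
        by_cases hx : x ∈ B
        · simpa [hx] using (h B hB).mp hx
        · simp only [hx, if_false, Set.mem_compl_iff]
          exact fun hy => hx ((h B hB).mpr hy)
      · intro h B hB
        by_cases hx : x ∈ B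
        · have := h B hB; rw [if_pos hx] at this; exact ⟨fun _ => this, fun _ => hx⟩
        · have := h B hB; rw [if_neg hx] at this
          exact ⟨fun h' => absurd h' hx, fun h' => absurd h' this⟩
    rw [heq]
    exact MeasurableSet.iInter fun B => MeasurableSet.iInter fun hB => by
      split <;> [exact hB; exact hB.compl]
  have hx_mem : x ∈ atom := fun B hB => Iff.rfl
  suffices h : ∀ y ∈ atom, y = x by
    have : atom = {x} := Set.eq_singleton_iff_unique_mem.mpr ⟨hx_mem, h⟩
    rw [← this]; exact hatom_meas
  intro y hy
  by_contra hxy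
  -- invariance of measurable sets under the atom relation
  have hInv : ∀ S : Set (M → A), MeasurableSet S → ∀ a ∈ S, ∀ b : M → A,
      (∀ m, ∀ B : Set A, MeasurableSet B → (a m ∈ B ↔ b m ∈ B)) → b ∈ S := by
    set mInv : MeasurableSpace (M → A) :=
      { MeasurableSet' := fun S => ∀ a ∈ S, ∀ b : M → A,
          (∀ m, ∀ B : Set A, MeasurableSet B → (a m ∈ B ↔ b m ∈ B)) → b ∈ S,
        measurableSet_empty := by simp,
        measurableSet_compl := fun S hS a ha b hrel hbS =>
          ha (hS b hbS a (fun m B hB => (hrel m B hB).symm)),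
        measurableSet_iUnion := fun f hf a ha b hrel => by
          obtain ⟨i, hi⟩ := Set.mem_iUnion.mp ha
          exact Set.mem_iUnion.mpr ⟨i, hf i a hi b hrel⟩ } with hmInv
    have hle : (MeasurableSpace.pi : MeasurableSpace (M → A)) ≤ mInv := by
      refine iSup_le fun m => ?_
      refine measurable_iff_comap_le.mp ?_
      intro B hB
      exact fun a ha b hrel => (hrel m B hB).mp ha
    exact fun S hS => hle S hS
  have hcyl : ∀ z : A, lam {a : M → A | a m0 = z} = 1 / (n : ENNReal) := by
    intro z
    have h := hlam {m0} (fun _ => z)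
    simpa using h
  have hsup : ∀ S : Set (M → A), MeasurableSet S → {a : M → A | a m0 = x} ⊆ S →
      {a : M → A | a m0 = y} ⊆ S := by
    intro S hS hsub b hb
    have ha : Function.update b m0 x ∈ S := hsub (by simp)
    refine hInv S hS _ ha b (fun m B hB => ?_)
    by_cases hm : m = m0
    · subst hm
      rw [Function.update_self]
      have hby : b m = y := hb
      rw [hby]
      exact hy B hB
    · rw [Function.update_of_ne hm]
  have h2n : 2 ≤ n := by
    rw [hn]
    exact Fintype.one_lt_card_iff.mpr ⟨y, x, hxy⟩
  have hge : (2 : ENNReal) / n ≤ lam {a : M → A | a m0 = x} := by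
    rw [measure_eq_iInf]
    refine le_iInf fun S => le_iInf fun hsub => le_iInf fun hS => ?_
    have hy' := hsup S hS hsub
    have hcompl : lam Sᶜ ≤ ((n - 2 : ℕ) : ENNReal) / n := by
      have hsub2 : Sᶜ ⊆ ⋃ z ∈ (Finset.univ \ {x, y} : Finset A), {a : M → A | a m0 = z} := by
        intro a haS
        have hax : a m0 ≠ x := fun h => haS (hsub h)
        have hay : a m0 ≠ y := fun h => haS (hy' h)
        exact Set.mem_biUnion (show a m0 ∈ (Finset.univ \ ({x, y} : Finset A)) by
          simp [Finset.mem_sdiff, hax, hay]) rfl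
      calc lam Sᶜ ≤ ∑ z ∈ (Finset.univ \ {x, y} : Finset A), lam {a : M → A | a m0 = z} :=
            (measure_mono hsub2).trans (measure_biUnion_finset_le _ _)
        _ = ((n - 2 : ℕ) : ENNReal) / n := by
            rw [Finset.sum_congr rfl (fun z _ => hcyl z), Finset.sum_const, nsmul_eq_mul,
              mul_one_div]
            congr 2
            rw [Finset.card_sdiff_of_subset (Finset.subset_univ _), Finset.card_univ,
              Finset.card_insert_of_notMem (by simpa using Ne.symm hxy), Finset.card_singleton]
    have hkey : (2 : ENNReal) / n + ((n - 2 : ℕ) : ENNReal) / n = 1 := by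
      rw [ENNReal.div_add_div_same]
      have : (2 : ENNReal) + ((n - 2 : ℕ) : ENNReal) = (n : ENNReal) := by
        norm_cast; omega
      rw [this, ENNReal.div_self hn0 (by simp)]
    have h1 : (2 : ENNReal) / n ≤ 1 - ((n - 2 : ℕ) : ENNReal) / n := by
      rw [← hkey, ENNReal.add_sub_cancel_right]
      exact (ENNReal.div_lt_top (by simp) hn0).ne
    have h2 : (1 : ENNReal) - ((n - 2 : ℕ) : ENNReal) / n ≤ 1 - lam Sᶜ :=
      tsub_le_tsub_left hcompl 1
    have h3 : (1 : ENNReal) - lam Sᶜ ≤ lam S := by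
      rw [tsub_le_iff_right]
      have := measure_add_measure_compl (μ := lam) hS
      rw [measure_univ] at this
      exact this.symm.le
    exact h1.trans (h2.trans h3)
  rw [hcyl x] at hge
  rw [div_eq_mul_inv, div_eq_mul_inv] at hge
  have := (ENNReal.mul_le_mul_iff_left (by simp [hn0]) (by simp [hn0])).mp hge
  norm_num at this

lemma aux_unif {A M : Type*} [Finite A] [TopologicalSpace A] [DiscreteTopology A]
    (g : (M → A) → ℂ) (hg : Continuous g) {ε : ℝ} (hε : 0 < ε) :
    ∃ s : Finset M, ∀ a b : M → A, (∀ m ∈ s, a m = b m) → dist (g a) (g b) ≤ ε := by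
  classical
  haveI : CompactSpace A := Finite.compactSpace
  have hcylnhds : ∀ (a : M → A) (U : Set (M → A)), U ∈ nhds a →
      ∃ s : Finset M, {b : M → A | ∀ m ∈ s, b m = a m} ⊆ U := by
    intro a U hU
    rw [nhds_pi, Filter.mem_pi] at hU
    obtain ⟨I, hIfin, t, ht, hsub⟩ := hU
    refine ⟨hIfin.toFinset, fun b hb => hsub ?_⟩
    intro i hi
    have hba : b i = a i := hb i (hIfin.mem_toFinset.mpr hi)
    rw [hba]
    have h2 := ht i
    rw [nhds_discrete A] at h2
    exact h2
  have hx : ∀ a : M → A, ∃ s : Finset M,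
      {b : M → A | ∀ m ∈ s, b m = a m} ⊆ g ⁻¹' Metric.ball (g a) (ε / 2) := fun a =>
    hcylnhds a _ (hg.continuousAt.preimage_mem_nhds (Metric.ball_mem_nhds _ (by positivity)))
  choose sa hsa using hx
  have hopen : ∀ a : M → A, IsOpen {b : M → A | ∀ m ∈ sa a, b m = a m} := by
    intro a
    have : {b : M → A | ∀ m ∈ sa a, b m = a m} =
        ⋂ m ∈ sa a, (fun b : M → A => b m) ⁻¹' {a m} := by
      ext b; simp
    rw [this]
    exact isOpen_biInter_finset fun m _ =>
      (continuous_apply m).isOpen_preimage _ (isOpen_discrete _)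
  obtain ⟨T, hT⟩ := IsCompact.elim_finite_subcover (isCompact_univ (X := M → A))
    (fun a => {b : M → A | ∀ m ∈ sa a, b m = a m}) hopen
    (fun b _ => Set.mem_iUnion.mpr ⟨b, fun m _ => rfl⟩)
  refine ⟨T.biUnion sa, fun a b hab => ?_⟩
  obtain ⟨a0, ha0T, ha⟩ := Set.mem_iUnion₂.mp (hT (Set.mem_univ a))
  have hb : b ∈ {b : M → A | ∀ m ∈ sa a0, b m = a0 m} := by
    intro m hm
    rw [← hab m (Finset.mem_biUnion.mpr ⟨a0, ha0T, hm⟩)]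
    exact ha m hm
  have h1 : dist (g a) (g a0) < ε / 2 := Metric.mem_ball.mp (hsa a0 ha)
  have h2 : dist (g b) (g a0) < ε / 2 := Metric.mem_ball.mp (hsa a0 hb)
  calc dist (g a) (g b) ≤ dist (g a) (g a0) + dist (g a0) (g b) := dist_triangle _ _ _
    _ = dist (g a) (g a0) + dist (g b) (g a0) := by rw [dist_comm (g a0)]
    _ ≤ ε / 2 + ε / 2 := by linarith
    _ = ε := by ring

/-- If the iterates of a linear CA `F` push `μ` to Haar measure weak* along
`J ⊆ ℕ`, then so do the iterates of the affine CA `G = F + c`. -/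
theorem affine_pushes_to_haar (A : Type*) [AddCommGroup A] [Fintype A]
    [MeasurableSpace A] [TopologicalSpace A] [DiscreteTopology A]
    (M : Type*) [Monoid M] [Countable M]
    (F : (M → A) → (M → A)) (hF_cont : Continuous F)
    (hF_add : ∀ x y, F (x + y) = F x + F y)
    (hF_shift : ∀ (e : M) (x : M → A), F (fun m => x (e * m)) = fun m => F x (e * m))
    (c : A) (G : (M → A) → (M → A)) (hG : ∀ a, G a = F a + fun _ => c)
    (μ : Measure (M → A)) [IsProbabilityMeasure μ] (J : Set ℕ)
    (lam : Measure (M → A)) [IsProbabilityMeasure lam]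
    (hlam : ∀ (s : Finset M) (f : M → A),
      lam {a | ∀ m ∈ s, a m = f m} = (1 / (Fintype.card A : ENNReal)) ^ s.card)
    (hF_conv : ∀ g : (M → A) → ℂ, Continuous g →
      Tendsto (fun j => ∫ a, g a ∂(μ.map F^[j])) (atTop ⊓ Filter.principal J)
        (nhds (∫ a, g a ∂lam))) :
    ∀ g : (M → A) → ℂ, Continuous g →
      Tendsto (fun j => ∫ a, g a ∂(μ.map G^[j])) (atTop ⊓ Filter.principal J)
        (nhds (∫ a, g a ∂lam)) := by
  classical
  intro g hg
  haveI : Nonempty M := ⟨1⟩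
  -- singletons of A are measurable
  have hsing : ∀ x : A, MeasurableSet ({x} : Set A) := fun x => aux_sing lam hlam x
  haveI : MeasurableSingletonClass A := ⟨hsing⟩
  have hAset : ∀ B : Set A, MeasurableSet B := fun B => B.to_countable.measurableSet
  haveI : OpensMeasurableSpace A := ⟨by
    refine MeasurableSpace.generateFrom_le fun B _ => hAset B⟩
  haveI : OpensMeasurableSpace (M → A) := Pi.opensMeasurableSpace
  -- basic measurability / continuity facts
  have hFm : Measurable F := hF_cont.measurable
  have hAfun : ∀ (φ : A → A), Measurable φ := fun φ => measurable_of_countable φ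
  have hGm : Measurable G := by
    have hGe : G = fun a => F a + fun _ => c := funext hG
    rw [hGe]
    refine measurable_pi_iff.mpr fun m => ?_
    exact (hAfun (fun z => z + c)).comp ((measurable_pi_apply m).comp hFm)
  have hτm : ∀ t : M → A, Measurable (fun a : M → A => a + t) := by
    intro t
    refine measurable_pi_iff.mpr fun m => ?_
    exact (hAfun (fun z => z + t m)).comp (measurable_pi_apply m)
  have hτc : ∀ t : M → A, Continuous (fun a : M → A => a + t) := by
    intro t
    refine continuous_pi fun m => ?_
    exact (continuous_of_discreteTopology (f := fun z : A => z + t m)).comp (continuous_apply m)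
  -- cylinder sets are measurable
  have hcylmeas : ∀ (s : Finset M) (f : M → A),
      MeasurableSet {a : M → A | ∀ m ∈ s, a m = f m} := by
    intro s f
    have : {a : M → A | ∀ m ∈ s, a m = f m} =
        ⋂ m ∈ s, (fun a : M → A => a m) ⁻¹' {f m} := by ext a; simp
    rw [this]
    exact MeasurableSet.biInter s.countable_toSet fun m _ =>
      (measurable_pi_apply m) (hsing (f m))
  -- the iterates of G are translates of the iterates of F
  set hseq : ℕ → M → A := fun j => j.rec (0 : M → A) (fun _ ih => F ih + fun _ => c) with hhseq
  have hit : ∀ j (a : M → A), G^[j] a = F^[j] a + hseq j := by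
    intro j
    induction j with
    | zero => intro a; simp [hhseq]
    | succ j ih =>
      intro a
      rw [Function.iterate_succ_apply', Function.iterate_succ_apply', ih a, hG, hF_add]
      show F (F^[j] a) + F (hseq j) + (fun _ => c) = F (F^[j] a) + hseq (j + 1)
      rw [add_assoc]
  -- transfer the integral over G^[j] to a translated integral over F^[j]
  have hkey : ∀ j, ∫ a, g a ∂(μ.map G^[j]) = ∫ a, g (a + hseq j) ∂(μ.map F^[j]) := by
    intro j
    rw [integral_map ((hGm.iterate j)).aemeasurable hg.aestronglyMeasurable,
      integral_map ((hFm.iterate j)).aemeasurable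
        ((show Continuous fun a : M → A => g (a + hseq j) from
          hg.comp (hτc (hseq j))).aestronglyMeasurable)]
    exact integral_congr_ae (Eventually.of_forall fun a => by simp only [hit j a])
  -- lam is translation invariant
  have hmap : ∀ t : M → A, lam.map (fun a => a + t) = lam := by
    intro t
    set C : Set (Set (M → A)) :=
      {S | ∃ (s : Finset M) (f : M → A), S = {a : M → A | ∀ m ∈ s, a m = f m}} with hC
    have hgen : (MeasurableSpace.pi : MeasurableSpace (M → A)) = MeasurableSpace.generateFrom C := by
      refine le_antisymm ?_ (MeasurableSpace.generateFrom_le ?_)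
      · refine iSup_le fun m => measurable_iff_comap_le.mp ?_
        intro B _
        have hBu : (fun a : M → A => a m) ⁻¹' B = ⋃ x ∈ B, {a : M → A | a m = x} := by
          ext a; simp [eq_comm]
        rw [hBu]
        refine MeasurableSet.biUnion B.to_countable fun x _ =>
          MeasurableSpace.measurableSet_generateFrom ?_
        exact ⟨{m}, fun _ => x, by ext a; simp⟩
      · rintro S ⟨s, f, rfl⟩
        exact hcylmeas s f
    have hpi : IsPiSystem C := by
      rintro S1 ⟨s1, f1, rfl⟩ S2 ⟨s2, f2, rfl⟩ hne
      obtain ⟨a0, ha1, ha2⟩ := hne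
      refine ⟨s1 ∪ s2, fun m => if m ∈ s1 then f1 m else f2 m, ?_⟩
      ext a
      simp only [Set.mem_inter_iff, Set.mem_setOf_eq, Finset.mem_union]
      constructor
      · rintro ⟨h1, h2⟩ m hm
        by_cases hm1 : m ∈ s1
        · rw [if_pos hm1]; exact h1 m hm1
        · rw [if_neg hm1]; exact h2 m (hm.resolve_left hm1)
      · intro h
        constructor
        · intro m hm
          have := h m (Or.inl hm); rwa [if_pos hm] at this
        · intro m hm
          have := h m (Or.inr hm)
          by_cases hm1 : m ∈ s1
          · rw [if_pos hm1] at this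
            rw [this, ← ha1 m hm1]
            exact ha2 m hm
          · rwa [if_neg hm1] at this
    haveI : IsProbabilityMeasure (lam.map (fun a : M → A => a + t)) :=
      Measure.isProbabilityMeasure_map (hτm t).aemeasurable
    refine MeasureTheory.ext_of_generate_finite C hgen hpi ?_ (by simp)
    rintro S ⟨s, f, rfl⟩
    rw [Measure.map_apply (hτm t) (hcylmeas s f)]
    have hpre : (fun a : M → A => a + t) ⁻¹' {a : M → A | ∀ m ∈ s, a m = f m} =
        {a : M → A | ∀ m ∈ s, a m = (fun m => f m - t m) m} := by
      ext a
      simp only [Set.mem_preimage, Set.mem_setOf_eq, Pi.add_apply]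
      exact forall₂_congr fun m _ => eq_sub_iff_add_eq.symm
    rw [hpre, hlam, hlam]
  have hlaminv : ∀ t : M → A, ∫ a, g (a + t) ∂lam = ∫ a, g a ∂lam := by
    intro t
    rw [← integral_map (hτm t).aemeasurable hg.aestronglyMeasurable, hmap t]
  -- integrability helper
  have hint : ∀ (ν : Measure (M → A)) [IsFiniteMeasure ν] (f : (M → A) → ℂ),
      Continuous f → Integrable f ν := by
    intro ν hν f hf
    exact integrableOn_univ.mp (hf.continuousOn.integrableOn_compact isCompact_univ)
  -- main estimate
  rw [Metric.tendsto_nhds]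
  intro ε hε
  obtain ⟨s, hs⟩ := aux_unif g hg (show (0:ℝ) < ε / 4 by positivity)
  set P : (M → A) → M → A := fun a m => if m ∈ s then a m else 0 with hP
  have hPc : Continuous P := by
    refine continuous_pi fun m => ?_
    by_cases hm : m ∈ s
    · simpa only [hP, if_pos hm] using continuous_apply m
    · simpa only [hP, if_neg hm] using continuous_const (y := (0:A))
  set tu : ({m // m ∈ s} → A) → M → A :=
    fun u m => if h : m ∈ s then u ⟨m, h⟩ else 0 with htu
  have hgu_cont : ∀ u, Continuous (fun a : M → A => g (P (a + tu u))) :=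
    fun u => hg.comp (hPc.comp (hτc (tu u)))
  have hev : ∀ᶠ j in atTop ⊓ Filter.principal J, ∀ u : {m // m ∈ s} → A,
      dist (∫ a, g (P (a + tu u)) ∂(μ.map F^[j])) (∫ a, g (P (a + tu u)) ∂lam) < ε / 4 := by
    rw [eventually_all]
    intro u
    exact Metric.tendsto_nhds.mp (hF_conv _ (hgu_cont u)) _ (by positivity)
  filter_upwards [hev] with j hj
  rw [hkey j]
  set ν := μ.map F^[j] with hν
  haveI : IsProbabilityMeasure ν := Measure.isProbabilityMeasure_map ((hFm.iterate j)).aemeasurable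
  set u0 : {m // m ∈ s} → A := fun m => hseq j m.1 with hu0
  have hptw : ∀ a : M → A, dist (g (a + hseq j)) (g (P (a + tu u0))) ≤ ε / 4 := by
    intro a
    refine hs _ _ fun m hm => ?_
    simp [hP, htu, hm, hu0]
  have hI1ν : Integrable (fun a => g (a + hseq j)) ν := hint ν _ (hg.comp (hτc _))
  have hI2ν : Integrable (fun a => g (P (a + tu u0))) ν := hint ν _ (hgu_cont u0)
  have hI1l : Integrable (fun a => g (a + hseq j)) lam := hint lam _ (hg.comp (hτc _))
  have hI2l : Integrable (fun a => g (P (a + tu u0))) lam := hint lam _ (hgu_cont u0)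
  have hbound : ∀ (ν' : Measure (M → A)) [IsProbabilityMeasure ν'],
      Integrable (fun a => g (a + hseq j)) ν' → Integrable (fun a => g (P (a + tu u0))) ν' →
      dist (∫ a, g (a + hseq j) ∂ν') (∫ a, g (P (a + tu u0)) ∂ν') ≤ ε / 4 := by
    intro ν' hpr h1 h2
    rw [dist_eq_norm, ← integral_sub h1 h2]
    calc ‖∫ a, (g (a + hseq j) - g (P (a + tu u0))) ∂ν'‖
        ≤ (ε / 4) * (ν' Set.univ).toReal := by
          refine norm_integral_le_of_norm_le_const (Eventually.of_forall fun a => ?_)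
          rw [← dist_eq_norm]
          exact hptw a
      _ = ε / 4 := by simp
  have d1 := hbound ν hI1ν hI2ν
  have d3 := hbound lam hI1l hI2l
  have d2 := hj u0
  have hlast : ∫ a, g (a + hseq j) ∂lam = ∫ a, g a ∂lam := hlaminv _
  have d3' : dist (∫ a, g (P (a + tu u0)) ∂lam) (∫ a, g a ∂lam) ≤ ε / 4 := by
    rw [← hlast, dist_comm]
    exact d3
  calc dist (∫ a, g (a + hseq j) ∂ν) (∫ a, g a ∂lam)
      ≤ dist (∫ a, g (a + hseq j) ∂ν) (∫ a, g (P (a + tu u0)) ∂ν)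
        + dist (∫ a, g (P (a + tu u0)) ∂ν) (∫ a, g (P (a + tu u0)) ∂lam)
        + dist (∫ a, g (P (a + tu u0)) ∂lam) (∫ a, g a ∂lam) := dist_triangle4 _ _ _ _
    _ ≤ ε / 4 + ε / 4 + ε / 4 := add_le_add (add_le_add d1 d2.le) d3'
    _ < ε := by linarith
end

section
/- Let p be prime, A = ℤ/p, and F = Id + f_1 σ^{m_1}(Id + f_2 σ^{m_2}(⋯(Id + f_J σ^{m_J})⋯)) a linear cellular automaton on A^{ℤ^D} written as a nested polynomial of shifts, with f_j ∈ (ℤ/p)^× and m_j ∈ ℤ^D. Then for all N ∈ ℕ, F^N = ∑_{k ∈ L^J(N)} f_{(k)} σ^{⟨k,m⟩}, where L^J(N) = {(k_1,...,k_J) ∈ ℕ^J : k_J ≪ k_{J−1} ≪ ⋯ ≪ k_1 ≪ N}, ⟨k,m⟩ = k_1 m_1 + ⋯ + k_J m_J, and f_{(k)} = C(N,k_1) C(k_1,k_2) ⋯ C(k_{J−1},k_J) f_1^{k_1} ⋯ f_J^{k_J} mod p; all these coefficients f_{(k)} are nonzero in ℤ/p. -/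
open scoped Classical

/-- Digitwise domination in base `p`: every base-`p` digit of `a` is at most
the corresponding digit of `b` (written `a ≪ b` in the paper). -/
def DigLe (p a b : ℕ) : Prop :=
  ∀ i : ℕ, (Nat.digits p a).getD i 0 ≤ (Nat.digits p b).getD i 0

/-- The nested linear cellular automaton
`F = Id + f₀ σ^{m₀}(Id + f₁ σ^{m₁}( ⋯ (Id + f_{J-1} σ^{m_{J-1}}) ⋯ ))`
on `(ℤ/p)^{ℤ^D}`, where `σ^v a = a (· + v)`; `nest p D J f m 0` is `F`. -/
noncomputable def nest (p D J : ℕ) (f : ℕ → ZMod p) (m : ℕ → Fin D → ℤ) :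
    ℕ → ((Fin D → ℤ) → ZMod p) → ((Fin D → ℤ) → ZMod p)
  | j, a => if h : j < J then fun n => a n + f j * nest p D J f m (j + 1) a (n + m j) else a
  termination_by j => J - j
  decreasing_by omega

/-- The Lucas set `L^J(N)` of tuples `(k₀,…,k_{J-1})` with
`k_{J-1} ≪ ⋯ ≪ k₀ ≪ N`. -/
noncomputable def lucasSet (p J N : ℕ) : Finset (Fin J → ℕ) :=
  (Fintype.piFinset fun _ : Fin J => Finset.range (N + 1)).filter
    (fun k => (∀ h : 0 < J, DigLe p (k ⟨0, h⟩) N) ∧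
      ∀ (i : ℕ) (h : i + 1 < J), DigLe p (k ⟨i + 1, h⟩) (k ⟨i, Nat.lt_of_succ_lt h⟩))

/-- The coefficient `f_{(k)} = C(N,k₀)C(k₀,k₁)⋯C(k_{J-2},k_{J-1}) f₀^{k₀}⋯f_{J-1}^{k_{J-1}}`
in `ℤ/p`. -/
noncomputable def lucasCoeff (p J : ℕ) (f : ℕ → ZMod p) (N : ℕ) (k : Fin J → ℕ) : ZMod p :=
  ∏ j : Fin J,
    ((Nat.choose (if hj : (j : ℕ) = 0 then N
        else k ⟨(j : ℕ) - 1, lt_of_le_of_lt (Nat.sub_le _ _) j.isLt⟩) (k j) : ℕ) : ZMod p) *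
      f j ^ (k j)

/-!
Under the shift representation `(ℤ/p)[ℤ^D] → End((ℤ/p)^{ℤ^D})`, `X^v ↦ σ^v`, the automaton `F`
is the image of the nested polynomial `P = 1 + f₀X^{m₀}(1 + f₁X^{m₁}(⋯))`, so `F^N` is the image
of `P^N`. Expanding binomially at each level of the nesting writes `P^N` as a sum over chains
`N ≥ k₀ ≥ k₁ ≥ ⋯` with coefficients `∏ C(k_{j-1}, k_j) f_j^{k_j}` (where `k_{-1} = N`). By Lucas'
theorem such a binomial coefficient is nonzero mod `p` exactly when `k_j ≪ k_{j-1}`, so the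
surviving chains are those of `L^J(N)`, and on them every factor is nonzero.
-/

section Lucas

variable {p : ℕ}

lemma digLe_iff_forall_digit_le (hp : 2 ≤ p) {a b : ℕ} :
    DigLe p a b ↔ ∀ i, a / p ^ i % p ≤ b / p ^ i % p := by
  simp only [DigLe, Nat.getD_digits _ _ hp]

lemma natCast_choose_ne_zero_of_le_of_lt (hp : p.Prime) {n k : ℕ} (hkn : k ≤ n) (hnp : n < p) :
    ((n.choose k : ℕ) : ZMod p) ≠ 0 := by
  rw [Ne, ZMod.natCast_eq_zero_iff]
  intro hdvd
  have : p ∣ n.factorial := by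
    rw [← Nat.choose_mul_factorial_mul_factorial hkn, mul_assoc]
    exact hdvd.mul_right _
  exact absurd (hp.dvd_factorial.mp this) (by omega)

theorem natCast_choose_ne_zero_iff_digLe (hp : p.Prime) (n k : ℕ) :
    ((n.choose k : ℕ) : ZMod p) ≠ 0 ↔ DigLe p k n := by
  have := Fact.mk hp
  have hbig : ∀ {x}, x ≤ n + k → x < p ^ (n + k) := fun hx =>
    hx.trans_lt (Nat.lt_pow_self hp.one_lt)
  have hlucas : ((n.choose k : ℕ) : ZMod p) =
      ∏ i ∈ Finset.range (n + k), (((n / p ^ i % p).choose (k / p ^ i % p) : ℕ) : ZMod p) := by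
    rw [(ZMod.natCast_eq_natCast_iff _ _ _).mpr (Choose.choose_modEq_prod_range_choose_nat
      (hbig (Nat.le_add_right n k)) (hbig (Nat.le_add_left k n))), Nat.cast_prod]
  have hdigit : ∀ i, (((n / p ^ i % p).choose (k / p ^ i % p) : ℕ) : ZMod p) ≠ 0 ↔
      k / p ^ i % p ≤ n / p ^ i % p := fun i => by
    refine ⟨fun h => ?_, fun h => natCast_choose_ne_zero_of_le_of_lt hp h (Nat.mod_lt _ hp.pos)⟩
    by_contra hlt
    exact h (by rw [Nat.choose_eq_zero_of_lt (not_le.mp hlt), Nat.cast_zero])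
  have hhigh : ∀ {x i}, x ≤ n + k → n + k ≤ i → x / p ^ i = 0 := fun hx hi =>
    Nat.div_eq_of_lt ((hbig hx).trans_le (Nat.pow_le_pow_right hp.pos hi))
  rw [hlucas, Finset.prod_ne_zero_iff, digLe_iff_forall_digit_le hp.two_le]
  refine ⟨fun h i => ?_, fun h i _ => (hdigit i).mpr (h i)⟩
  rcases lt_or_ge i (n + k) with hi | hi
  · exact (hdigit i).mp (h i (Finset.mem_range.mpr hi))
  · rw [hhigh (Nat.le_add_left k n) hi, hhigh (Nat.le_add_right n k) hi]

end Lucas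

section LucasSet

variable {p J N : ℕ}

/- `Fin.cons N k` is the chain `N, k₀, k₁, …`, in which the predecessor of `k j` sits at
`j.castSucc`. -/
lemma lucasCoeff_eq_prod_cons (f : ℕ → ZMod p) (k : Fin J → ℕ) :
    lucasCoeff p J f N k = ∏ j : Fin J,
      (((Fin.cons N k : Fin (J + 1) → ℕ) j.castSucc).choose (k j) : ZMod p) * f j ^ k j := by
  refine Finset.prod_congr rfl fun j _ => ?_
  rcases j with ⟨_ | i, hi⟩ <;> rfl

lemma lucasSet_eq_filter :
    lucasSet p J N = {k ∈ Fintype.piFinset fun _ : Fin J => Finset.range (N + 1) |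
      ∀ j : Fin J, DigLe p (k j) ((Fin.cons N k : Fin (J + 1) → ℕ) j.castSucc)} := by
  refine Finset.filter_congr fun k _ => ⟨fun ⟨h₀, hsucc⟩ => ?_, fun h => ?_⟩
  · rintro ⟨_ | i, hi⟩
    · exact h₀ hi
    · exact hsucc i hi
  · exact ⟨fun h₀ => h ⟨0, h₀⟩, fun i hi => h ⟨i + 1, hi⟩⟩

lemma lucasCoeff_cons (f : ℕ → ZMod p) (k₀ : ℕ) (k : Fin J → ℕ) :
    lucasCoeff p (J + 1) f N (Fin.cons k₀ k) =
      (N.choose k₀ : ZMod p) * f 0 ^ k₀ * lucasCoeff p J (fun i => f (i + 1)) k₀ k := by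
  simp only [lucasCoeff_eq_prod_cons, Fin.prod_univ_succ, ← Fin.succ_castSucc, Fin.cons_succ,
    Fin.castSucc_zero, Fin.cons_zero, Fin.val_succ, Fin.val_zero, mul_assoc]

lemma lucasCoeff_eq_zero_of_notMem (hp : p.Prime) (f : ℕ → ZMod p) {k : Fin J → ℕ}
    (hk : k ∈ Fintype.piFinset fun _ : Fin J => Finset.range (N + 1))
    (hk' : k ∉ lucasSet p J N) : lucasCoeff p J f N k = 0 := by
  rw [lucasSet_eq_filter, Finset.mem_filter, not_and, not_forall] at hk'
  obtain ⟨j, hj⟩ := hk' hk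
  rw [lucasCoeff_eq_prod_cons]
  refine Finset.prod_eq_zero (Finset.mem_univ j) ?_
  rw [not_ne_iff.mp (mt (natCast_choose_ne_zero_iff_digLe hp _ _).mp hj), zero_mul]

lemma lucasCoeff_ne_zero (hp : p.Prime) {f : ℕ → ZMod p} (hf : ∀ j < J, f j ≠ 0)
    {k : Fin J → ℕ} (hk : k ∈ lucasSet p J N) : lucasCoeff p J f N k ≠ 0 := by
  have := Fact.mk hp
  rw [lucasSet_eq_filter, Finset.mem_filter] at hk
  rw [lucasCoeff_eq_prod_cons, Finset.prod_ne_zero_iff]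
  exact fun j _ => mul_ne_zero ((natCast_choose_ne_zero_iff_digLe hp _ _).mpr (hk.2 j))
    (pow_ne_zero _ (hf j j.isLt))

end LucasSet

lemma Finset.sum_piFinset_const_fin_succ {α M : Type*} [AddCommMonoid M] {n : ℕ} (s : Finset α)
    (g : (Fin (n + 1) → α) → M) :
    ∑ k ∈ Fintype.piFinset (fun _ => s), g k =
      ∑ a ∈ s, ∑ k ∈ Fintype.piFinset (fun _ : Fin n => s), g (Fin.cons a k) := by
  rw [← Finset.sum_product' (f := fun a k => g (Fin.cons a k))]
  refine Finset.sum_nbij' (fun k => (k 0, Fin.tail k)) (fun x => Fin.cons x.1 x.2)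
    ?_ ?_ ?_ ?_ ?_
  · intro k hk
    simp only [Finset.mem_product, Fintype.mem_piFinset] at hk ⊢
    exact ⟨hk 0, fun i => hk i.succ⟩
  · intro x hx
    simp only [Finset.mem_product, Fintype.mem_piFinset] at hx ⊢
    exact Fin.forall_fin_succ.mpr ⟨hx.1, hx.2⟩
  · intro k _
    exact Fin.cons_self_tail k
  · intro x _
    simp
  · intro k _
    rw [Fin.cons_self_tail]

lemma add_one_pow_eq_sum_range {A : Type*} [CommSemiring A] (x : A) {N B : ℕ} (h : N ≤ B) :
    (x + 1) ^ N = ∑ i ∈ Finset.range (B + 1), x ^ i * (N.choose i : A) := by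
  simp only [add_pow, one_pow, mul_one]
  refine Finset.sum_subset (Finset.range_subset_range.mpr (by omega)) fun i _ hi => ?_
  rw [Nat.choose_eq_zero_of_lt (by simpa using hi), Nat.cast_zero, mul_zero]

section GroupAlgebra

open AddMonoidAlgebra

variable {R G : Type*} [CommSemiring R] [AddCommMonoid G]

noncomputable def nestPoly : ℕ → (ℕ → R) → (ℕ → G) → AddMonoidAlgebra R G
  | 0, _, _ => 1
  | J + 1, f, m => 1 + single (m 0) (f 0) * nestPoly J (fun i => f (i + 1)) (fun i => m (i + 1))

theorem nestPoly_pow {p : ℕ} (J : ℕ) (f : ℕ → ZMod p) (m : ℕ → G) {N B : ℕ} (hNB : N ≤ B) :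
    nestPoly J f m ^ N = ∑ k ∈ Fintype.piFinset (fun _ : Fin J => Finset.range (B + 1)),
      single (∑ j, k j • m j) (lucasCoeff p J f N k) := by
  induction J generalizing f m N with
  | zero => simp [nestPoly, lucasCoeff, AddMonoidAlgebra.one_def]
  | succ J ih =>
    rw [nestPoly, add_comm, add_one_pow_eq_sum_range _ hNB, Finset.sum_piFinset_const_fin_succ]
    refine Finset.sum_congr rfl fun k₀ hk₀ => ?_
    rw [mul_pow, single_pow, ih _ _ (Finset.mem_range_succ_iff.mp hk₀), Finset.mul_sum,
      Finset.sum_mul]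
    refine Finset.sum_congr rfl fun k _ => ?_
    rw [lucasCoeff_cons, Fin.sum_univ_succ, natCast_def, single_mul_single, single_mul_single]
    congr 1
    · simp
    · ring

theorem nestPoly_pow_eq_sum_lucasSet {p : ℕ} (hp : p.Prime) (J : ℕ) (f : ℕ → ZMod p)
    (m : ℕ → G) (N : ℕ) :
    nestPoly J f m ^ N = ∑ k ∈ lucasSet p J N, single (∑ j, k j • m j) (lucasCoeff p J f N k) := by
  rw [nestPoly_pow J f m le_rfl]
  refine (Finset.sum_subset (lucasSet_eq_filter ▸ Finset.filter_subset _ _) fun k hk hk' => ?_).symm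
  rw [lucasCoeff_eq_zero_of_notMem hp f hk hk', single_zero]

end GroupAlgebra

section Shift

variable (R G : Type*) [CommSemiring R] [AddMonoid G]

noncomputable def shift : Multiplicative G →* Module.End R (G → R) where
  toFun v := LinearMap.funLeft R R (· + v.toAdd)
  map_one' := by ext; simp
  map_mul' v w := by ext; simp [add_assoc]

noncomputable def shiftAlgHom : AddMonoidAlgebra R G →ₐ[R] Module.End R (G → R) :=
  AddMonoidAlgebra.lift R (Module.End R (G → R)) G (shift R G)

variable {R G}

lemma shiftAlgHom_single_apply (v : G) (r : R) (a : G → R) (n : G) :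
    shiftAlgHom R G (AddMonoidAlgebra.single v r) a n = r * a (n + v) := by
  simp [shiftAlgHom, shift, LinearMap.funLeft_apply]

end Shift

lemma nest_eq_shiftAlgHom (p D J : ℕ) (f : ℕ → ZMod p) (m : ℕ → Fin D → ℤ) (j : ℕ)
    (a : (Fin D → ℤ) → ZMod p) : nest p D J f m j a =
      shiftAlgHom _ _ (nestPoly (J - j) (fun i => f (j + i)) (fun i => m (j + i))) a := by
  induction j, a using nest.induct p D J with
  | case1 j a hj ih =>
    obtain ⟨t, ht⟩ : ∃ t, J - j = t + 1 := ⟨J - j - 1, by omega⟩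
    have hshift {α : Type} (g : ℕ → α) : (fun i => g (j + 1 + i)) = fun i => g (j + (i + 1)) :=
      funext fun i => congrArg g (by omega)
    rw [show J - (j + 1) = t by omega, hshift f, hshift m] at ih
    ext n
    rw [nest, dif_pos hj, ht, nestPoly, map_add, map_one, map_mul, LinearMap.add_apply,
      Module.End.one_apply, Pi.add_apply, Module.End.mul_apply, shiftAlgHom_single_apply, ← ih]
    rfl
  | case2 j a hj =>
    rw [nest, dif_neg hj, show J - j = 0 by omega, nestPoly, map_one, Module.End.one_apply]

/-- Expansion of the powers of a nested linear CA on `(ℤ/p)^{ℤ^D}`: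
`F^N = ∑_{k ∈ L^J(N)} f_{(k)} σ^{⟨k,m⟩}`, and all the coefficients `f_{(k)}`
are nonzero in `ℤ/p` provided each `f_j` is. -/
theorem nest_pow_expansion (p D J : ℕ) (hp : p.Prime)
    (f : ℕ → ZMod p) (m : ℕ → Fin D → ℤ) (hf : ∀ j < J, f j ≠ 0) (N : ℕ) :
    (∀ (a : (Fin D → ℤ) → ZMod p) (n : Fin D → ℤ),
      (nest p D J f m 0)^[N] a n =
        ∑ k ∈ lucasSet p J N,
          lucasCoeff p J f N k * a (n + fun d => ∑ j : Fin J, (k j : ℤ) * m j d)) ∧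
    ∀ k ∈ lucasSet p J N, lucasCoeff p J f N k ≠ 0 := by
  have hF : (nest p D J f m 0)^[N] = shiftAlgHom _ _ (nestPoly J f m ^ N) := by
    rw [map_pow, Module.End.coe_pow]
    congr
    funext a
    simpa using nest_eq_shiftAlgHom p D J f m 0 a
  refine ⟨fun a n => ?_, fun k hk => lucasCoeff_ne_zero hp hf hk⟩
  rw [hF, nestPoly_pow_eq_sum_lucasSet hp, map_sum]
  simp [shiftAlgHom_single_apply, Finset.sum_fn]
end
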